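/- If Γ → Δ is a morphism of pointed folded labeled core graphs and the base point of Δ has degree one, then the base point of Γ also has degree one, and the restriction of the morphism to the graphs obtained by trimming the edges at the base points is a well-defined morphism of labeled graphs. -/

import Mathlib

/-! Framework: Serre graphs with labels in `X ∪ X⁻¹` (encoded as `X × Bool`),
labeled-graph morphisms, paths, `π₁` as a set of elements of the free group,
folded graphs, core graphs, folding/trimming steps, edge subdivision along a
homomorphism (the functor `F_φ`), Whitehead graphs and the category FGR. -/

/-- A graph in the sense of Serre together with an `X`-labeling. -/
structure LGraph (X : Type) : Type 1 where
  V : Type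
  E : Type
  init : E → V
  bar : E → E
  bar_ne : ∀ e, bar e ≠ e
  bar_bar : ∀ e, bar (bar e) = e
  lab : E → X × Bool
  lab_bar : ∀ e, lab (bar e) = ((lab e).1, !(lab e).2)

namespace LGraph

variable {X : Type}

/-- Terminal vertex of an edge. -/
def term (Γ : LGraph X) (e : Γ.E) : Γ.V := Γ.init (Γ.bar e)

/-- The label of an edge as an element of the free group. -/
def labF (Γ : LGraph X) (e : Γ.E) : FreeGroup X :=
  cond (Γ.lab e).2 (FreeGroup.of (Γ.lab e).1) ((FreeGroup.of (Γ.lab e).1)⁻¹)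

/-- `Γ.chain v p`: the list of edges `p` is a path starting at `v`. -/
def chain (Γ : LGraph X) : Γ.V → List Γ.E → Prop
  | _, [] => True
  | v, e :: p => Γ.init e = v ∧ chain Γ (Γ.term e) p

/-- Endpoint of a path starting at `v`. -/
def endOf (Γ : LGraph X) (v : Γ.V) (p : List Γ.E) : Γ.V :=
  p.foldl (fun _ e => Γ.term e) v

/-- Label of a path, as an element of the free group. -/
def pathLabel (Γ : LGraph X) (p : List Γ.E) : FreeGroup X :=
  (p.map Γ.labF).prod

/-- A path is reduced if it never immediately backtracks. -/
def Reduced (Γ : LGraph X) (p : List Γ.E) : Prop :=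
  p.Chain' (fun e f => f ≠ Γ.bar e)

/-- `π₁` of a graph at a base vertex: labels of closed paths at `v`. -/
def pi1 (Γ : LGraph X) (v : Γ.V) : Set (FreeGroup X) :=
  { g | ∃ p, Γ.chain v p ∧ Γ.endOf v p = v ∧ Γ.pathLabel p = g }

/-- A labeled graph is folded if distinct edges with a common initial vertex
have distinct labels. -/
def Folded (Γ : LGraph X) : Prop :=
  ∀ e f : Γ.E, Γ.init e = Γ.init f → Γ.lab e = Γ.lab f → e = f

/-- Connectivity. -/
def Connected (Γ : LGraph X) : Prop :=
  ∀ v w : Γ.V, ∃ p, Γ.chain v p ∧ Γ.endOf v p = w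

/-- An (unpointed) core graph: folded, connected, every edge lies on a
reduced circuit (reduced closed path which is also cyclically reduced). -/
def IsUCore (Γ : LGraph X) : Prop :=
  Γ.Folded ∧ Γ.Connected ∧
    ∀ e : Γ.E, ∃ v p, Γ.chain v p ∧ Γ.endOf v p = v ∧ Γ.Reduced p ∧
      (∀ e₁ eₙ, p.head? = some e₁ → p.getLast? = some eₙ → e₁ ≠ Γ.bar eₙ) ∧ e ∈ p

end LGraph

/-- Formal inverse of a letter in `X ∪ X⁻¹`. -/
def letterInv {X : Type} (a : X × Bool) : X × Bool := (a.1, !a.2)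

namespace LGraph

variable {X : Type}

/-- A 2-path: a pair of consecutive edges `(e, f)` with `f ≠ ē`. -/
def TwoPath (Γ : LGraph X) (e f : Γ.E) : Prop :=
  Γ.init f = Γ.term e ∧ f ≠ Γ.bar e

/-- The Whitehead graph of a labeled graph, as a set of unordered pairs of
letters: the pairs `{l(e), l(f̄)}` over 2-paths `(e, f)`. -/
def W (Γ : LGraph X) : Set (Sym2 (X × Bool)) :=
  { s | ∃ e f, Γ.TwoPath e f ∧ s = s(Γ.lab e, letterInv (Γ.lab f)) }

end LGraph

/-- The full Whitehead graph on `X`: all non-diagonal unordered pairs. -/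
def FullW (X : Type) : Set (Sym2 (X × Bool)) := { s | ¬ s.IsDiag }

/-- Morphism of labeled graphs. -/
structure LHom {X : Type} (Γ Δ : LGraph X) where
  mapV : Γ.V → Δ.V
  mapE : Γ.E → Δ.E
  map_init : ∀ e, Δ.init (mapE e) = mapV (Γ.init e)
  map_bar : ∀ e, Δ.bar (mapE e) = mapE (Γ.bar e)
  map_lab : ∀ e, Δ.lab (mapE e) = Γ.lab e

/-- Pointed labeled graph. -/
structure PLGraph (X : Type) extends LGraph X where
  base : V

/-- Morphism of pointed labeled graphs. -/
structure PHom {X : Type} (Γ Δ : PLGraph X) extends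
    LHom Γ.toLGraph Δ.toLGraph where
  map_base : mapV Γ.base = Δ.base

namespace PLGraph

variable {X : Type}

/-- `π₁` of a pointed graph at its base point. -/
def pi1S (Γ : PLGraph X) : Set (FreeGroup X) := Γ.toLGraph.pi1 Γ.base

/-- A pointed core graph: folded, connected, and every edge lies on a reduced
closed path through the base point. -/
def IsCore (Γ : PLGraph X) : Prop :=
  Γ.toLGraph.Folded ∧ Γ.toLGraph.Connected ∧
    ∀ e : Γ.E, ∃ p, Γ.toLGraph.chain Γ.base p ∧
      Γ.toLGraph.endOf Γ.base p = Γ.base ∧ Γ.toLGraph.Reduced p ∧ e ∈ p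

end PLGraph

/-- `Δ` is obtained from `Γ` by one folding: identifying two distinct edges
`e₁, e₂` with the same initial vertex and the same label (and their inverses,
and their terminal vertices). -/
structure FoldStep {X : Type} (Γ Δ : LGraph X) where
  f : LHom Γ Δ
  e₁ : Γ.E
  e₂ : Γ.E
  ne : e₁ ≠ e₂
  init_eq : Γ.init e₁ = Γ.init e₂
  lab_eq : Γ.lab e₁ = Γ.lab e₂
  surjV : Function.Surjective f.mapV
  surjE : Function.Surjective f.mapE
  glueE : f.mapE e₁ = f.mapE e₂
  injE : ∀ d d', f.mapE d = f.mapE d' →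
    d = d' ∨ ({d, d'} : Set Γ.E) = {e₁, e₂} ∨
      ({d, d'} : Set Γ.E) = {Γ.bar e₁, Γ.bar e₂}
  injV : ∀ v w, f.mapV v = f.mapV w →
    v = w ∨ ({v, w} : Set Γ.V) = {Γ.term e₁, Γ.term e₂}

/-- `Δ` is obtained from `Γ` by one trimming: deleting a degree-one vertex
`v` together with its edge pair `{e, ē}`; `j` is the inclusion of `Δ` in `Γ`. -/
structure TrimStep {X : Type} (Γ Δ : LGraph X) where
  j : LHom Δ Γ
  v : Γ.V
  e : Γ.E
  init_e : Γ.init e = v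
  deg_one : ∀ d, Γ.init d = v → d = e
  injV : Function.Injective j.mapV
  injE : Function.Injective j.mapE
  rangeV : Set.range j.mapV = {w | w ≠ v}
  rangeE : Set.range j.mapE = {d | d ≠ e ∧ d ≠ Γ.bar e}

/-- Pointed folding step. -/
def PFold {X : Type} (Γ Δ : PLGraph X) : Prop :=
  ∃ F : FoldStep Γ.toLGraph Δ.toLGraph, F.f.mapV Γ.base = Δ.base

/-- Pointed trimming step (the trimmed vertex is not the base point). -/
def PTrim {X : Type} (Γ Δ : PLGraph X) : Prop :=
  ∃ T : TrimStep Γ.toLGraph Δ.toLGraph, T.v ≠ Γ.base ∧ T.j.mapV Δ.base = Γ.base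

/-- One folding or trimming step on pointed graphs. -/
def PStep {X : Type} (Γ Δ : PLGraph X) : Prop := PFold Γ Δ ∨ PTrim Γ Δ

/-- One folding or trimming step on unpointed graphs. -/
def UStep {X : Type} (Γ Δ : LGraph X) : Prop :=
  Nonempty (FoldStep Γ Δ) ∨ Nonempty (TrimStep Γ Δ)

/-- `Δ` is the subdivision of the `Y`-labeled graph `Γ` along
`φ : Y → FreeGroup X`: each edge `e` is replaced by a fresh path spelling the
reduced word of `φ` applied to the label of `e` (the functor `F_φ`). -/
structure Subdiv {Y X : Type} [DecidableEq X] (φ : Y → FreeGroup X)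
    (Γ : LGraph Y) (Δ : LGraph X) where
  vmap : Γ.V → Δ.V
  emap : Γ.E → List Δ.E
  vmap_inj : Function.Injective vmap
  emap_ne : ∀ e, emap e ≠ []
  emap_chain : ∀ e, Δ.chain (vmap (Γ.init e)) (emap e)
  emap_end : ∀ e, Δ.endOf (vmap (Γ.init e)) (emap e) = vmap (Γ.term e)
  emap_bar : ∀ e, emap (Γ.bar e) = ((emap e).reverse).map Δ.bar
  emap_spell : ∀ e, (emap e).map Δ.lab = (FreeGroup.lift φ (Γ.labF e)).toWord
  emap_nodup : ∀ e, (emap e).Nodup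
  emap_nobar : ∀ e d, d ∈ emap e → Δ.bar d ∉ emap e
  emap_disj : ∀ e e', e' ≠ e → e' ≠ Γ.bar e → ∀ d, d ∈ emap e → d ∉ emap e'
  cover_e : ∀ d : Δ.E, ∃ e, d ∈ emap e
  interior : ∀ w : Δ.V, w ∉ Set.range vmap →
    ∃ d₁ d₂ : Δ.E, d₁ ≠ d₂ ∧ Δ.init d₁ = w ∧ Δ.init d₂ = w ∧
      ∀ d, Δ.init d = w → d = d₁ ∨ d = d₂

/-- Whitehead pairs read along a word: `{wᵢ, wᵢ₊₁⁻¹}` over consecutive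
letters. -/
def wordW {X : Type} (l : List (X × Bool)) : Set (Sym2 (X × Bool)) :=
  { s | ∃ l₁ a b l₂, l = l₁ ++ a :: b :: l₂ ∧ s = s(a, letterInv b) }

/-- The image of a letter under (the extension of) `φ`. -/
def letterIm {Y X : Type} (φ : Y → FreeGroup X) (a : Y × Bool) : FreeGroup X :=
  cond a.2 (φ a.1) (φ a.1)⁻¹

/-- A morphism in the category FGR of free groups with restrictions, from
`(Y, N)` to `(X, M)`: a non-degenerate homomorphism `F_Y → F_X` (given on the
basis `Y`) satisfying conditions (i)–(iv). -/
structure FGRHom (Y X : Type) [DecidableEq X] (N : Set (Sym2 (Y × Bool)))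
    (M : Set (Sym2 (X × Bool))) where
  φ : Y → FreeGroup X
  nondeg : ∀ y, φ y ≠ 1
  whitehead : ∀ y, wordW (φ y).toWord ⊆ M
  lastLetter : ∀ a b : Y × Bool, s(a, b) ∈ N →
    ∃ ta tb, (letterIm φ a).toWord.getLast? = some ta ∧
      (letterIm φ b).toWord.getLast? = some tb ∧ ta ≠ tb ∧ s(ta, tb) ∈ M

/-- No cancellation in the product of two (reduced) words. -/
def NoCancel {X : Type} [DecidableEq X] (p q : FreeGroup X) : Prop :=
  (p * q).toWord = p.toWord ++ q.toWord

/-- A word is cyclically reduced: its last letter is not the inverse of its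
first letter. -/
def CycRed {X : Type} [DecidableEq X] (w : FreeGroup X) : Prop :=
  ∀ a b, w.toWord.head? = some a → w.toWord.getLast? = some b → b ≠ (a.1, !a.2)


/-! A morphism out of a folded graph is locally injective, so if the base point of `Δ` has
degree one, all edges at the base point of `Γ` map to the same edge and hence coincide.
In a pointed core graph every vertex `v` other than the base point has two distinct edges
`d̄, d'` leaving it: `d` is the last edge of a path from the base point to `v`, and `d'` the
edge following `d` on a reduced closed path through the base point. So no such `v` can be
sent to the base point of `Δ`, which shows that nothing but the trimmed edge pair and the
base point is sent to the trimmed data of `Δ`. -/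

namespace LGraph

variable {X : Type} (Γ : LGraph X)

theorem chain_append (v : Γ.V) (l r : List Γ.E) :
    Γ.chain v (l ++ r) ↔ Γ.chain v l ∧ Γ.chain (Γ.endOf v l) r := by
  induction l generalizing v with
  | nil => simp [chain, endOf]
  | cons e l ih => simp [chain, endOf, ih, and_assoc]

theorem endOf_concat (v : Γ.V) (p : List Γ.E) (d : Γ.E) :
    Γ.endOf v (p ++ [d]) = Γ.term d := by
  simp [endOf]

variable {Γ}

theorem Connected.exists_term_eq (h : Γ.Connected) {u v : Γ.V} (huv : u ≠ v) :
    ∃ d, Γ.term d = v := by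
  obtain ⟨p, -, hp⟩ := h u v
  rcases List.eq_nil_or_concat p with rfl | ⟨q, d, rfl⟩
  · exact absurd hp huv
  · exact ⟨d, by rw [← hp, List.concat_eq_append, endOf_concat]⟩

end LGraph

namespace LHom

variable {X : Type} {Γ Δ : LGraph X} (f : LHom Γ Δ)

theorem eq_of_mapE_eq (hΓ : Γ.Folded) {d d' : Γ.E} (hinit : Γ.init d = Γ.init d')
    (h : f.mapE d = f.mapE d') : d = d' :=
  hΓ d d' hinit (by rw [← f.map_lab, h, f.map_lab])

theorem mapE_eq_of_deg_le_one {w : Δ.V} {e : Δ.E} (hw : ∀ d, Δ.init d = w → d = e)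
    {d : Γ.E} (hd : f.mapV (Γ.init d) = w) : f.mapE d = e :=
  hw _ (by rw [f.map_init, hd])

theorem eq_of_init_eq_of_deg_le_one (hΓ : Γ.Folded) {w : Δ.V} {e : Δ.E}
    (hw : ∀ d, Δ.init d = w → d = e) {d d' : Γ.E} (hd : f.mapV (Γ.init d) = w)
    (hinit : Γ.init d' = Γ.init d) : d' = d :=
  f.eq_of_mapE_eq hΓ hinit <| by
    rw [f.mapE_eq_of_deg_le_one hw hd, f.mapE_eq_of_deg_le_one hw (hinit ▸ hd)]

end LHom

namespace PLGraph

variable {X : Type} {Γ : PLGraph X}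

theorem IsCore.exists_init_eq_base (hΓ : Γ.IsCore) (e : Γ.E) : ∃ d, Γ.init d = Γ.base := by
  obtain ⟨p, hp, -, -, he⟩ := hΓ.2.2 e
  cases p with
  | nil => simp at he
  | cons d p => exact ⟨d, hp.1⟩

theorem IsCore.exists_init_eq_term_ne_bar (hΓ : Γ.IsCore) {d : Γ.E}
    (hd : Γ.term d ≠ Γ.base) : ∃ d', Γ.init d' = Γ.term d ∧ d' ≠ Γ.bar d := by
  obtain ⟨p, hp, hend, hred, hdp⟩ := hΓ.2.2 d
  obtain ⟨l, s, rfl⟩ := List.append_of_mem hdp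
  cases s with
  | nil => exact absurd (by rwa [LGraph.endOf_concat] at hend) hd
  | cons d' s =>
    have hchain := ((Γ.chain_append _ l (d :: d' :: s)).1 hp).2
    exact ⟨d', hchain.2.1, (List.isChain_append_cons_cons.1 hred).2.1⟩

theorem IsCore.mapV_ne_of_deg_le_one (hΓ : Γ.IsCore) {Δ : LGraph X}
    (f : LHom Γ.toLGraph Δ) {w : Δ.V} {e : Δ.E} (hw : ∀ d, Δ.init d = w → d = e)
    {v : Γ.V} (hv : v ≠ Γ.base) : f.mapV v ≠ w := by
  intro hfv
  obtain ⟨d, rfl⟩ := hΓ.2.1.exists_term_eq hv.symm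
  obtain ⟨d', hd', hne⟩ := hΓ.exists_init_eq_term_ne_bar hv
  exact hne (f.eq_of_init_eq_of_deg_le_one hΓ.1 hw (d := Γ.bar d) hfv hd')

end PLGraph

theorem stmt15_general {X : Type} (Γ Δ : PLGraph X) (hΓ : Γ.IsCore)
    (hne : Nonempty Γ.E) (f : PHom Γ Δ) (eΔ : Δ.E)
    (hinit : Δ.toLGraph.init eΔ = Δ.base)
    (hdeg : ∀ d, Δ.toLGraph.init d = Δ.base → d = eΔ) :
    ∃ eΓ : Γ.E, Γ.toLGraph.init eΓ = Γ.base ∧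
      (∀ d, Γ.toLGraph.init d = Γ.base → d = eΓ) ∧
      f.mapE eΓ = eΔ ∧
      (∀ d : Γ.E, d ≠ eΓ → d ≠ Γ.toLGraph.bar eΓ →
        f.mapE d ≠ eΔ ∧ f.mapE d ≠ Δ.toLGraph.bar eΔ) ∧
      (∀ v : Γ.V, v ≠ Γ.base → f.mapV v ≠ Δ.base) := by
  obtain ⟨e₀⟩ := hne
  obtain ⟨eΓ, hinitΓ⟩ := hΓ.exists_init_eq_base e₀
  have hbase : f.mapV (Γ.init eΓ) = Δ.base := by rw [hinitΓ, f.map_base]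
  have hV : ∀ v : Γ.V, v ≠ Γ.base → f.mapV v ≠ Δ.base :=
    fun _ hv => hΓ.mapV_ne_of_deg_le_one f.toLHom hdeg hv
  have hdegΓ : ∀ d, Γ.init d = Γ.base → d = eΓ := fun d hd =>
    f.eq_of_init_eq_of_deg_le_one hΓ.1 hdeg hbase (hd.trans hinitΓ.symm)
  refine ⟨eΓ, hinitΓ, hdegΓ, f.mapE_eq_of_deg_le_one hdeg hbase,
    fun d hd hd' => ⟨fun h => ?_, fun h => ?_⟩, hV⟩
  · refine hV _ (fun h' => hd (hdegΓ d h')) ?_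
    rw [← f.map_init, h, hinit]
  · refine hV (Γ.init (Γ.bar d)) (fun h' => hd' ?_) ?_
    · rw [← hdegΓ _ h', Γ.bar_bar]
    · rw [← f.map_init, ← f.map_bar, h, Δ.bar_bar, hinit]

/-- If `Γ → Δ` is a morphism of pointed folded core graphs
(`Γ` having at least one edge) and the base point of `Δ` has degree one, then
the base point of `Γ` has degree one and the morphism restricts to a
well-defined morphism of the trimmed graphs: no other edge or vertex hits the
trimmed data. -/
theorem stmt15 {X : Type} (Γ Δ : PLGraph X) (hΓ : Γ.IsCore) (hΔ : Δ.IsCore)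
    (hne : Nonempty Γ.E) (f : PHom Γ Δ) (eΔ : Δ.E)
    (hinit : Δ.toLGraph.init eΔ = Δ.base)
    (hdeg : ∀ d, Δ.toLGraph.init d = Δ.base → d = eΔ) :
    ∃ eΓ : Γ.E, Γ.toLGraph.init eΓ = Γ.base ∧
      (∀ d, Γ.toLGraph.init d = Γ.base → d = eΓ) ∧
      f.mapE eΓ = eΔ ∧
      (∀ d : Γ.E, d ≠ eΓ → d ≠ Γ.toLGraph.bar eΓ →
        f.mapE d ≠ eΔ ∧ f.mapE d ≠ Δ.toLGraph.bar eΔ) ∧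
      (∀ v : Γ.V, v ≠ Γ.base → f.mapV v ≠ Δ.base) :=
  stmt15_general Γ Δ hΓ hne f eΔ hinit hdeg
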